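/- arXiv:1508.06863 — 5 statements merged into one kernel-verified Lean document; each statement's English description precedes it below -/
import Mathlib

section
/- Let (P_t)_{t≥0} be a measurable Markovian transition function on (E,B). If for some t₀ > 0 the kernel P_{t₀} possesses a finite invariant measure m, then the measure ν defined by ν(f) = (1/t₀)∫₀^{t₀} m(P_s f) ds is a finite invariant measure for the whole semigroup (P_t)_{t≥0}. -/
open MeasureTheory ProbabilityTheory Set Filter Topology ENNReal

/-- If `P_{t₀}` has a finite invariant measure `m`, then
`ν(f) = (1/t₀) ∫₀^{t₀} m(P_s f) ds` is a finite invariant measure for the whole semigroup. -/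
theorem stmt2 {E : Type*} [MeasurableSpace E] (P : ℝ → Kernel E E)
    (hMar : ∀ t : ℝ, IsMarkovKernel (P t))
    (hsem : ∀ s t : ℝ, 0 ≤ s → 0 ≤ t → (P s).comp (P t) = P (t + s))
    (hmeas : ∀ A : Set E, MeasurableSet A →
      Measurable (fun q : ℝ × E => P q.1 q.2 A))
    (m : Measure E) [IsFiniteMeasure m]
    (t₀ : ℝ) (ht₀ : 0 < t₀)
    (hinv : ∀ A : Set E, MeasurableSet A → ∫⁻ x, P t₀ x A ∂m = m A) :
    -- the measure ν(f) = (1/t₀) ∫₀^{t₀} m(P_s f) ds is finite ...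
    ((ENNReal.ofReal t₀)⁻¹ *
        ∫⁻ s in Set.Ioc (0 : ℝ) t₀, (∫⁻ x, P s x Set.univ ∂m) ∂volume < ⊤) ∧
    -- ... and invariant for the semigroup: ν(P_t 1_A) = ν(1_A) for all t ≥ 0.
    ∀ t : ℝ, 0 ≤ t → ∀ A : Set E, MeasurableSet A →
      (ENNReal.ofReal t₀)⁻¹ *
          ∫⁻ s in Set.Ioc (0 : ℝ) t₀,
            (∫⁻ x, ∫⁻ y, P t y A ∂(P s x) ∂m) ∂volume =
        (ENNReal.ofReal t₀)⁻¹ *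
          ∫⁻ s in Set.Ioc (0 : ℝ) t₀, (∫⁻ x, P s x A ∂m) ∂volume := by
  classical
  constructor
  · -- finiteness
    have h1 : ∫⁻ s in Set.Ioc (0:ℝ) t₀, (∫⁻ x, P s x Set.univ ∂m) ∂volume
        = ∫⁻ _ in Set.Ioc (0:ℝ) t₀, m Set.univ ∂volume := by
      apply setLIntegral_congr_fun measurableSet_Ioc
      intro s _
      have := hMar s
      simp [measure_univ]
    rw [h1]
    simp only [setLIntegral_const, Real.volume_Ioc, sub_zero]
    refine ENNReal.mul_lt_top ?_ (ENNReal.mul_lt_top (measure_lt_top m _) ?_)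
    · exact ENNReal.inv_lt_top.mpr (by simpa using ht₀)
    · exact ENNReal.ofReal_lt_top
  · intro t ht A hA
    set f : ℝ → ℝ≥0∞ := fun s => ∫⁻ x, P s x A ∂m with hf
    have hfm : Measurable f := (hmeas A hA).lintegral_prod_right'
    have hgA : ∀ s : ℝ, Measurable fun y => P s y A := fun s =>
      (hmeas A hA).comp (measurable_prodMk_left : Measurable fun y : E => (s, y))
    have hbind : m.bind (P t₀) = m := by
      ext B hB
      rw [Measure.bind_apply hB (P t₀).measurable.aemeasurable]
      exact hinv B hB
    -- periodicity of f
    have hper : ∀ s : ℝ, 0 ≤ s → f (s + t₀) = f s := by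
      intro s hs
      have h1 : P (s + t₀) = (P s).comp (P t₀) := by
        rw [hsem s t₀ hs ht₀.le, add_comm]
      calc f (s + t₀) = ∫⁻ x, ((P s).comp (P t₀)) x A ∂m := by rw [hf]; simp_rw [h1]
        _ = ∫⁻ x, ∫⁻ y, P s y A ∂(P t₀ x) ∂m := by
            simp_rw [Kernel.comp_apply' _ _ _ hA]
        _ = ∫⁻ y, P s y A ∂(m.bind (P t₀)) :=
            (MeasureTheory.Measure.lintegral_bind (P t₀).measurable.aemeasurable (hgA s).aemeasurable).symm
        _ = f s := by rw [hbind]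
    -- the shift lemma
    have hshift : ∀ a b c : ℝ, ∫⁻ s in Set.Ioc a b, f (s + c) ∂volume
        = ∫⁻ s in Set.Ioc (a + c) (b + c), f s ∂volume := by
      intro a b c
      have hpre : (fun x : ℝ => x + c) ⁻¹' Set.Ioc (a + c) (b + c) = Set.Ioc a b := by
        ext x
        simp only [Set.mem_preimage, Set.mem_Ioc]
        constructor <;> rintro ⟨h1, h2⟩ <;> constructor <;> linarith
      have := (measurePreserving_add_right volume c).setLIntegral_comp_preimage
        (measurableSet_Ioc : MeasurableSet (Set.Ioc (a + c) (b + c))) hfm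
      rw [hpre] at this
      exact this
    set I : ℝ → ℝ≥0∞ := fun u => ∫⁻ s in Set.Ioc (0:ℝ) t₀, f (s + u) ∂volume with hI
    have hI0 : I 0 = ∫⁻ s in Set.Ioc (0:ℝ) t₀, f s ∂volume := by simp [hI]
    have hIstep : ∀ u : ℝ, 0 ≤ u → I (u + t₀) = I u := by
      intro u hu
      apply setLIntegral_congr_fun measurableSet_Ioc
      intro s hs
      dsimp only
      have h1 : s + (u + t₀) = (s + u) + t₀ := by ring
      rw [h1, hper (s + u) (by linarith [hs.1])]
    have hbase : ∀ u : ℝ, 0 ≤ u → u ≤ t₀ → I u = I 0 := by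
      intro u hu hut
      have hsplit : Set.Ioc (0:ℝ) t₀ = Set.Ioc 0 (t₀ - u) ∪ Set.Ioc (t₀ - u) t₀ :=
        (Set.Ioc_union_Ioc_eq_Ioc (by linarith) (by linarith)).symm
      have hdisj : Disjoint (Set.Ioc (0:ℝ) (t₀ - u)) (Set.Ioc (t₀ - u) t₀) :=
        (Set.Ioc_disjoint_Ioc_of_le le_rfl)
      have hsum : I u = (∫⁻ s in Set.Ioc (0:ℝ) (t₀ - u), f (s + u) ∂volume)
          + ∫⁻ s in Set.Ioc (t₀ - u) t₀, f (s + u) ∂volume := by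
        rw [hI]
        simp only
        rw [hsplit, lintegral_union measurableSet_Ioc hdisj]
      have hA1 : ∫⁻ s in Set.Ioc (0:ℝ) (t₀ - u), f (s + u) ∂volume
          = ∫⁻ s in Set.Ioc u t₀, f s ∂volume := by
        have := hshift 0 (t₀ - u) u
        rwa [zero_add, sub_add_cancel] at this
      have hA2 : ∫⁻ s in Set.Ioc (t₀ - u) t₀, f (s + u) ∂volume
          = ∫⁻ s in Set.Ioc (0:ℝ) u, f s ∂volume := by
        have h2 : ∫⁻ s in Set.Ioc (t₀ - u) t₀, f (s + u) ∂volume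
            = ∫⁻ s in Set.Ioc t₀ (t₀ + u), f s ∂volume := by
          have := hshift (t₀ - u) t₀ u
          rwa [sub_add_cancel] at this
        have h3 : ∫⁻ s in Set.Ioc (0:ℝ) u, f (s + t₀) ∂volume
            = ∫⁻ s in Set.Ioc t₀ (t₀ + u), f s ∂volume := by
          have := hshift 0 u t₀
          rwa [zero_add, add_comm u t₀] at this
        have h4 : ∫⁻ s in Set.Ioc (0:ℝ) u, f (s + t₀) ∂volume
            = ∫⁻ s in Set.Ioc (0:ℝ) u, f s ∂volume := by
          apply setLIntegral_congr_fun measurableSet_Ioc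
          exact fun s hs => hper s hs.1.le
        rw [h2, ← h3, h4]
      have hback : (∫⁻ s in Set.Ioc (0:ℝ) u, f s ∂volume)
          + ∫⁻ s in Set.Ioc u t₀, f s ∂volume
          = ∫⁻ s in Set.Ioc (0:ℝ) t₀, f s ∂volume := by
        rw [← lintegral_union measurableSet_Ioc (Set.Ioc_disjoint_Ioc_of_le le_rfl),
          Set.Ioc_union_Ioc_eq_Ioc hu hut]
      rw [hsum, hA1, hA2, hI0, add_comm, hback]
    have hall : ∀ n : ℕ, ∀ u : ℝ, 0 ≤ u → u ≤ (n + 1) * t₀ → I u = I 0 := by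
      intro n
      induction n with
      | zero =>
        intro u hu h
        exact hbase u hu (by push_cast at h; linarith)
      | succ k ih =>
        intro u hu h
        by_cases hc : u ≤ t₀
        · exact hbase u hu hc
        · have h1 : (0:ℝ) ≤ u - t₀ := by linarith
          have h2 : u - t₀ ≤ (k + 1) * t₀ := by push_cast at h ⊢; linarith
          have h3 := hIstep (u - t₀) h1
          rw [sub_add_cancel] at h3
          exact h3.trans (ih (u - t₀) h1 h2)
    have hIt : I t = I 0 := by
      obtain ⟨n, hn⟩ := exists_nat_ge (t / t₀)
      refine hall n t ht ?_
      have : t / t₀ ≤ (n : ℝ) := hn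
      have ht' : t ≤ (n : ℝ) * t₀ := by
        rw [div_le_iff₀ ht₀] at this
        linarith
      nlinarith
    -- finish: rewrite the double integral as f (s + t)
    congr 1
    have hmain : ∫⁻ s in Set.Ioc (0:ℝ) t₀, (∫⁻ x, ∫⁻ y, P t y A ∂(P s x) ∂m) ∂volume
        = I t := by
      apply setLIntegral_congr_fun measurableSet_Ioc
      intro s hs
      have hcomp : (P t).comp (P s) = P (s + t) := hsem t s ht hs.1.le
      have : ∀ x, ∫⁻ y, P t y A ∂(P s x) = P (s + t) x A := by
        intro x
        rw [← hcomp, Kernel.comp_apply' _ _ _ hA]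
      simp_rw [this]
      rfl
    rw [hmain, hIt, hI0]
end

section
/- Let P be a Markovian operator on L¹(m) (m a finite measure) respecting m-classes, and S_n = (1/n)∑_{k=0}^{n-1} P^k. If the index c(P,m) := lim_{ε↓0} sup_{A: m(A)≤ε} sup_{n≥1} m(S_n 1_A) satisfies c(P,m) < m(E), then there exists a nonzero finite invariant measure for P which is absolutely continuous with respect to m. -/
open MeasureTheory ProbabilityTheory Set Filter Topology ENNReal

section ULim

noncomputable def ULim (U : Ultrafilter ℕ) (x : ℕ → ℝ≥0∞) : ℝ≥0∞ := limUnder U x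

lemma tendsto_ULim (U : Ultrafilter ℕ) (x : ℕ → ℝ≥0∞) : Tendsto x U (𝓝 (ULim U x)) := by
  apply tendsto_nhds_limUnder
  obtain ⟨a, -, ha⟩ := isCompact_univ.ultrafilter_le_nhds (U.map x) (by simp)
  exact ⟨a, by rwa [Ultrafilter.coe_map] at ha⟩

variable {U : Ultrafilter ℕ} {x y : ℕ → ℝ≥0∞}

lemma ULim_eq {a : ℝ≥0∞} (h : Tendsto x (U : Filter ℕ) (𝓝 a)) : ULim U x = a :=
  h.limUnder_eq

lemma ULim_const {c : ℝ≥0∞} : ULim U (fun _ => c) = c := ULim_eq tendsto_const_nhds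

lemma ULim_add : ULim U (fun j => x j + y j) = ULim U x + ULim U y :=
  ULim_eq ((tendsto_ULim U x).add (tendsto_ULim U y))

lemma ULim_const_mul {c : ℝ≥0∞} (hc : c ≠ ⊤) :
    ULim U (fun j => c * x j) = c * ULim U x :=
  ULim_eq (ENNReal.Tendsto.const_mul (tendsto_ULim U x) (Or.inr hc))

lemma ULim_sum {ι : Type*} (s : Finset ι) (f : ι → ℕ → ℝ≥0∞) :
    ULim U (fun j => ∑ i ∈ s, f i j) = ∑ i ∈ s, ULim U (f i) :=
  ULim_eq (tendsto_finset_sum s fun i _ => tendsto_ULim U (f i))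

lemma ULim_mono (h : ∀ j, x j ≤ y j) : ULim U x ≤ ULim U y :=
  le_of_tendsto_of_tendsto' (tendsto_ULim U x) (tendsto_ULim U y) h

lemma le_ULim (hU : (U : Filter ℕ) ≤ atTop) {c : ℝ≥0∞} (h : ∀ᶠ j in atTop, c ≤ x j) :
    c ≤ ULim U x :=
  ge_of_tendsto (tendsto_ULim U x) (h.filter_mono hU)

lemma ULim_of_tendsto (hU : (U : Filter ℕ) ≤ atTop) {a : ℝ≥0∞}
    (h : Tendsto x atTop (𝓝 a)) : ULim U x = a :=
  ULim_eq (h.mono_left hU)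

end ULim

section Phic

variable {E : Type*} [MeasurableSpace E]

noncomputable def phic (φ : Set E → ℝ≥0∞) (A : Set E) : ℝ≥0∞ :=
  ⨅ (s : ℕ → Set E) (_ : Monotone s) (_ : ∀ n, MeasurableSet (s n))
    (_ : (⋃ n, s n) = A), ⨆ n, φ (s n)

lemma phic_le_seq (φ : Set E → ℝ≥0∞) {A : Set E} {s : ℕ → Set E} (hs : Monotone s)
    (hm : ∀ n, MeasurableSet (s n)) (hA : (⋃ n, s n) = A) :
    phic φ A ≤ ⨆ n, φ (s n) :=
  iInf_le_of_le s (iInf_le_of_le hs (iInf_le_of_le hm (iInf_le_of_le hA le_rfl)))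

lemma phic_le (φ : Set E → ℝ≥0∞) {A : Set E} (hA : MeasurableSet A) :
    phic φ A ≤ φ A := by
  refine (phic_le_seq φ (s := fun _ => A) (fun _ _ _ => le_rfl) (fun _ => hA) (iUnion_const A)).trans ?_
  simp

lemma le_phic (φ : Set E → ℝ≥0∞) (ψ : Measure E) (h : ∀ B, MeasurableSet B → ψ B ≤ φ B)
    {A : Set E} : ψ A ≤ phic φ A := by
  refine le_iInf fun s => le_iInf fun hs => le_iInf fun hm => le_iInf fun hA => ?_
  rw [← hA, hs.directed_le.measure_iUnion]
  exact iSup_mono fun n => h _ (hm n)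

lemma exists_seq_of_phic_lt (φ : Set E → ℝ≥0∞) {A : Set E} {r : ℝ≥0∞}
    (h : phic φ A < r) : ∃ s : ℕ → Set E, Monotone s ∧ (∀ n, MeasurableSet (s n)) ∧
      (⋃ n, s n) = A ∧ (⨆ n, φ (s n)) < r := by
  rw [phic, iInf_lt_iff] at h
  obtain ⟨s, h⟩ := h
  rw [iInf_lt_iff] at h
  obtain ⟨hs, h⟩ := h
  rw [iInf_lt_iff] at h
  obtain ⟨hm, h⟩ := h
  rw [iInf_lt_iff] at h
  obtain ⟨hA, h⟩ := h
  exact ⟨s, hs, hm, hA, h⟩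

variable {φ : Set E → ℝ≥0∞}
  (hempty : φ ∅ = 0)
  (hmono : ∀ {A B : Set E}, A ⊆ B → φ A ≤ φ B)
  (hadd : ∀ {A B : Set E}, MeasurableSet A → MeasurableSet B → Disjoint A B →
    φ (A ∪ B) = φ A + φ B)

include hempty hmono hadd

omit hmono in
lemma phi_biUnion (f : ℕ → Set E) (hm : ∀ i, MeasurableSet (f i))
    (hd : Pairwise (Function.onFun Disjoint f)) (N : ℕ) :
    φ (⋃ i ∈ Finset.range N, f i) = ∑ i ∈ Finset.range N, φ (f i) := by
  induction N with
  | zero => simpa using hempty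
  | succ N ih =>
    have hU : (⋃ i ∈ Finset.range (N + 1), f i) = (⋃ i ∈ Finset.range N, f i) ∪ f N := by
      rw [Finset.range_add_one, Finset.set_biUnion_insert, union_comm]
    have hmb : MeasurableSet (⋃ i ∈ Finset.range N, f i) :=
      (Finset.range N).measurableSet_biUnion fun i _ => hm i
    have hdisj : Disjoint (⋃ i ∈ Finset.range N, f i) (f N) := by
      rw [disjoint_iUnion_left]
      intro i
      rw [disjoint_iUnion_left]
      intro hi
      exact hd (by simp at hi; omega)
    rw [Finset.sum_range_succ, ← ih, hU, hadd hmb (hm N) hdisj]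

omit hmono hadd in
lemma phic_empty : phic φ ∅ = 0 :=
  le_antisymm (by simpa [hempty] using phic_le φ MeasurableSet.empty) (zero_le)

lemma phic_iUnion (f : ℕ → Set E) (hm : ∀ i, MeasurableSet (f i))
    (hd : Pairwise (Function.onFun Disjoint f)) :
    phic φ (⋃ i, f i) = ∑' i, phic φ (f i) := by
  refine le_antisymm ?_ ?_
  · -- ≤ : epsilon argument
    rcases eq_top_or_lt_top (∑' i, phic φ (f i)) with htop | hfin
    · exact htop ▸ le_top
    refine ENNReal.le_of_forall_pos_le_add fun ε hε _ => ?_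
    obtain ⟨δ, hδpos, hδsum⟩ := ENNReal.exists_pos_sum_of_countable'
      (by exact_mod_cast hε.ne' : (ε : ℝ≥0∞) ≠ 0) ℕ
    have hchoice : ∀ i : ℕ, ∃ s : ℕ → Set E, Monotone s ∧ (∀ n, MeasurableSet (s n)) ∧
        (⋃ n, s n) = f i ∧ (⨆ n, φ (s n)) < phic φ (f i) + δ i := by
      intro i
      refine exists_seq_of_phic_lt φ ?_
      exact ENNReal.lt_add_right
        (ne_top_of_le_ne_top hfin.ne (ENNReal.le_tsum i)) (hδpos i).ne'
    choose s hsmono hsmeas hsU hslt using hchoice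
    set t : ℕ → Set E := fun n => ⋃ i ∈ Finset.range (n + 1), s i n with ht
    have hsub : ∀ i n, s i n ⊆ f i := fun i n => (hsU i) ▸ subset_iUnion (s i) n
    have htmono : Monotone t := by
      intro n m hnm
      refine iUnion₂_subset fun i hi => ?_
      simp only [Finset.mem_range] at hi
      refine subset_trans (hsmono i hnm) ?_
      have hmem : i ∈ Finset.range (m + 1) := Finset.mem_range.2 (by omega)
      show s i m ⊆ ⋃ j ∈ Finset.range (m + 1), s j m
      exact subset_biUnion_of_mem (u := fun j => s j m) hmem
    have htmeas : ∀ n, MeasurableSet (t n) :=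
      fun n => (Finset.range (n + 1)).measurableSet_biUnion fun i _ => hsmeas i n
    have htU : (⋃ n, t n) = ⋃ i, f i := by
      apply le_antisymm
      · refine iUnion_subset fun n => iUnion₂_subset fun i _ => ?_
        exact (hsub i n).trans (subset_iUnion f i)
      · refine iUnion_subset fun i => ?_
        rw [← hsU i]
        refine iUnion_subset fun n => ?_
        intro x hx
        refine mem_iUnion.2 ⟨max i n, ?_⟩
        have hin : i ∈ Finset.range (max i n + 1) := by
          simp only [Finset.mem_range]; omega
        exact mem_biUnion hin (hsmono i (le_max_right i n) hx)
      
    have htval : ∀ n, φ (t n) ≤ (∑' i, phic φ (f i)) + ε := by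
      intro n
      have hdisj' : Pairwise (Function.onFun Disjoint fun i => s i n) := by
        intro i j hij
        exact (hd hij).mono (hsub i n) (hsub j n)
      rw [ht]
      rw [phi_biUnion hempty hadd _ (fun i => hsmeas i n) hdisj']
      have h1 : ∑ i ∈ Finset.range (n + 1), φ (s i n) ≤
          ∑ i ∈ Finset.range (n + 1), (phic φ (f i) + δ i) := by
        refine Finset.sum_le_sum fun i _ => ?_
        exact le_of_lt (lt_of_le_of_lt (le_iSup (fun n => φ (s i n)) n) (hslt i))
      refine h1.trans ?_
      rw [Finset.sum_add_distrib]
      refine add_le_add (ENNReal.sum_le_tsum _) ?_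
      exact (ENNReal.sum_le_tsum _).trans hδsum.le
    exact (phic_le_seq φ htmono htmeas htU).trans (iSup_le htval)
  · -- ≥ direction
    refine le_iInf fun s => le_iInf fun hs => le_iInf fun hm' => le_iInf fun hA => ?_
    rw [ENNReal.tsum_eq_iSup_nat]
    refine iSup_le fun N => ?_
    have h1 : ∀ i, phic φ (f i) ≤ ⨆ n, φ (s n ∩ f i) := by
      intro i
      refine phic_le_seq φ (fun n m hnm => inter_subset_inter_left _ (hs hnm))
        (fun n => (hm' n).inter (hm i)) ?_
      rw [← iUnion_inter, hA]
      exact inter_eq_right.2 (subset_iUnion f i)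
    calc ∑ i ∈ Finset.range N, phic φ (f i)
        ≤ ∑ i ∈ Finset.range N, ⨆ n, φ (s n ∩ f i) := Finset.sum_le_sum fun i _ => h1 i
      _ = ⨆ n, ∑ i ∈ Finset.range N, φ (s n ∩ f i) := by
          refine ENNReal.finsetSum_iSup_of_monotone fun i => ?_
          exact fun n m hnm => hmono (inter_subset_inter_left _ (hs hnm))
      _ ≤ ⨆ n, φ (s n) := by
          refine iSup_mono fun n => ?_
          rw [← phi_biUnion hempty hadd (fun i => s n ∩ f i)
            (fun i => (hm' n).inter (hm i))
            (fun i j hij => (hd hij).mono inter_subset_right inter_subset_right)]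
          exact hmono (iUnion₂_subset fun i _ => inter_subset_left)

end Phic
noncomputable def iterK {E : Type*} [MeasurableSpace E] (P : Kernel E E) : ℕ → Kernel E E
  | 0 => Kernel.deterministic id measurable_id
  | (n + 1) => (iterK P n).comp P

/-- If the index `c(P,m) = lim_{ε↓0} sup_{m(A)≤ε} sup_{n≥1} m(S_n 1_A)` is strictly smaller
than `m(E)`, then `P` possesses a nonzero finite invariant measure absolutely continuous
with respect to `m`. -/
theorem stmt5 {E : Type*} [MeasurableSpace E] (P : Kernel E E) [IsMarkovKernel P]
    (m : Measure E) [IsFiniteMeasure m]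
    (hac : ∀ A : Set E, MeasurableSet A → m A = 0 → ∫⁻ x, P x A ∂m = 0)
    (hc : (⨅ (ε : ℝ≥0∞) (_ : 0 < ε), ⨆ (A : Set E) (_ : MeasurableSet A) (_ : m A ≤ ε),
        ⨆ (n : ℕ) (_ : 1 ≤ n),
          (n : ℝ≥0∞)⁻¹ * ∑ k ∈ Finset.range n, ∫⁻ x, iterK P k x A ∂m)
      < m Set.univ) :
    ∃ ρ : E → ℝ≥0∞, Measurable ρ ∧ (∫⁻ x, ρ x ∂m < ⊤) ∧ m.withDensity ρ ≠ 0 ∧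
      ∀ A : Set E, MeasurableSet A →
        ∫⁻ x, P x A ∂(m.withDensity ρ) = m.withDensity ρ A := by
  classical
  -- extract ε from the hypothesis
  obtain ⟨ε, hεpos, hSε⟩ : ∃ ε : ℝ≥0∞, 0 < ε ∧
      (⨆ (A : Set E) (_ : MeasurableSet A) (_ : m A ≤ ε), ⨆ (n : ℕ) (_ : 1 ≤ n),
        (n : ℝ≥0∞)⁻¹ * ∑ k ∈ Finset.range n, ∫⁻ x, iterK P k x A ∂m) < m Set.univ := by
    obtain ⟨ε, h⟩ := iInf_lt_iff.1 hc
    obtain ⟨hε, h⟩ := iInf_lt_iff.1 h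
    exact ⟨ε, hε, h⟩
  set Sε := (⨆ (A : Set E) (_ : MeasurableSet A) (_ : m A ≤ ε), ⨆ (n : ℕ) (_ : 1 ≤ n),
      (n : ℝ≥0∞)⁻¹ * ∑ k ∈ Finset.range n, ∫⁻ x, iterK P k x A ∂m) with hSdef
  set M := m Set.univ with hMdef
  have hMne : M ≠ ⊤ := measure_ne_top m _
  have hiterM : ∀ k, IsMarkovKernel (iterK P k) := by
    intro k
    induction k with
    | zero =>
      rw [show iterK P 0 = Kernel.deterministic id measurable_id from rfl]
      infer_instance
    | succ k ih =>
      rw [show iterK P (k + 1) = (iterK P k).comp P from rfl]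
      haveI := ih
      infer_instance
  have hmeasP : Measurable (⇑P) := P.measurable
  have hmeasIter : ∀ k, Measurable (⇑(iterK P k)) := fun k => (iterK P k).measurable
  set mk : ℕ → Measure E := fun k => m.bind ⇑(iterK P k) with hmk
  have hdirac : ⇑(iterK P 0) = Measure.dirac := by
    funext x
    rw [show iterK P 0 = Kernel.deterministic id measurable_id from rfl,
      Kernel.deterministic_apply]
    rfl
  have h0 : mk 0 = m := by
    simp only [hmk, hdirac, Measure.bind_dirac]
  have hcomm : ∀ k (x : E), iterK P (k + 1) x = (iterK P k x).bind ⇑P := by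
    intro k
    induction k with
    | zero =>
      intro x
      rw [show iterK P 1 = (iterK P 0).comp P from rfl, Kernel.comp_apply, hdirac,
        Measure.bind_dirac]
      exact (Measure.dirac_bind hmeasP x).symm
    | succ k ih =>
      intro x
      have h1 : ⇑(iterK P (k + 1)) = fun y => (iterK P k y).bind ⇑P := funext ih
      calc iterK P (k + 2) x = (P x).bind ⇑(iterK P (k + 1)) := by
            rw [show iterK P (k + 2) = (iterK P (k + 1)).comp P from rfl, Kernel.comp_apply]
        _ = (P x).bind (fun y => (iterK P k y).bind ⇑P) := by rw [h1]
        _ = ((P x).bind ⇑(iterK P k)).bind ⇑P :=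
            (Measure.bind_bind (hmeasIter k).aemeasurable hmeasP.aemeasurable).symm
        _ = (iterK P (k + 1) x).bind ⇑P := by
            rw [show iterK P (k + 1) = (iterK P k).comp P from rfl, Kernel.comp_apply]
  have hsucc : ∀ k, mk (k + 1) = (mk k).bind ⇑P := by
    intro k
    simp only [hmk]
    rw [Measure.bind_bind (hmeasIter k).aemeasurable hmeasP.aemeasurable]
    have h1 : ⇑(iterK P (k + 1)) = fun x => (iterK P k x).bind ⇑P := funext (hcomm k)
    rw [h1]
  have hmkuniv : ∀ k, mk k Set.univ = M := by
    intro k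
    haveI := hiterM k
    simp only [hmk]
    rw [Measure.bind_apply MeasurableSet.univ (hmeasIter k).aemeasurable]
    simp [measure_univ, hMdef]
  have hmknull : ∀ k (A : Set E), MeasurableSet A → m A = 0 → mk k A = 0 := by
    intro k
    induction k with
    | zero => intro A hA h; rw [h0]; exact h
    | succ k ih =>
      intro A hA h
      rw [hsucc k, Measure.bind_apply hA hmeasP.aemeasurable]
      have hPA : Measurable fun x => P x A := P.measurable_coe hA
      have hmeasN : MeasurableSet {x | P x A ≠ 0} := by
        have : {x | P x A ≠ 0} = ((fun x => P x A) ⁻¹' {0})ᶜ := by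
          ext x; simp
        rw [this]
        exact (hPA (measurableSet_singleton 0)).compl
      have hm0 : m {x | P x A ≠ 0} = 0 := by
        have h2 := hac A hA h
        rw [lintegral_eq_zero_iff hPA] at h2
        have h3 : ∀ᵐ x ∂m, P x A = 0 := by
          filter_upwards [h2] with x hx using hx
        have := ae_iff.mp h3
        simpa using this
      have h4 : mk k {x | P x A ≠ 0} = 0 := ih _ hmeasN hm0
      rw [lintegral_eq_zero_iff hPA]
      rw [Filter.EventuallyEq, ae_iff]
      simpa using h4
  -- Cesàro averages as measures
  set νM : ℕ → Measure E := fun j => ((j : ℝ≥0∞)⁻¹ • (∑ k ∈ Finset.range j, mk k)) with hνM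
  have hνapp : ∀ j (A : Set E), νM j A = (j : ℝ≥0∞)⁻¹ * ∑ k ∈ Finset.range j, mk k A := by
    intro j A
    simp only [hνM, Measure.smul_apply, Measure.finset_sum_apply, smul_eq_mul]
  have hνuniv : ∀ j, 1 ≤ j → νM j Set.univ = M := by
    intro j hj
    rw [hνapp]
    have h1 : ∑ k ∈ Finset.range j, mk k Set.univ = (j : ℝ≥0∞) * M := by
      rw [Finset.sum_congr rfl fun k _ => hmkuniv k]
      simp [Finset.sum_const, Finset.card_range, nsmul_eq_mul]
    have hj0 : (j : ℝ≥0∞) ≠ 0 := by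
      simp only [ne_eq, Nat.cast_eq_zero]
      omega
    rw [h1, ← mul_assoc, ENNReal.inv_mul_cancel hj0 (ENNReal.natCast_ne_top j), one_mul]
  have hνle : ∀ j (A : Set E), νM j A ≤ M := by
    intro j A
    rcases Nat.eq_zero_or_pos j with h | h
    · subst h
      rw [hνapp]
      simp
    · exact (measure_mono (Set.subset_univ A)).trans (hνuniv j h).le
  have hνnull : ∀ j (A : Set E), MeasurableSet A → m A = 0 → νM j A = 0 := by
    intro j A hA h
    rw [hνapp]
    rw [Finset.sum_congr rfl fun k _ => hmknull k A hA h]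
    simp
  -- the ultrafilter limit functional
  set U : Ultrafilter ℕ := Ultrafilter.of atTop with hUdef
  have hU : (U : Filter ℕ) ≤ atTop := Ultrafilter.of_le _
  set φ : Set E → ℝ≥0∞ := fun A => ULim U (fun j => νM j A) with hφ
  have hφmono : ∀ {A B : Set E}, A ⊆ B → φ A ≤ φ B := by
    intro A B h
    exact ULim_mono fun j => measure_mono h
  have hφempty : φ ∅ = 0 := by
    simp only [hφ, measure_empty]
    exact ULim_const
  have hφadd : ∀ {A B : Set E}, MeasurableSet A → MeasurableSet B → Disjoint A B →
      φ (A ∪ B) = φ A + φ B := by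
    intro A B hA hB hd
    simp only [hφ]
    have h1 : (fun j => νM j (A ∪ B)) = fun j => νM j A + νM j B :=
      funext fun j => measure_union hd hB
    rw [h1, ULim_add]
  have hφuniv : φ Set.univ = M := by
    simp only [hφ]
    refine ULim_of_tendsto hU ?_
    refine Tendsto.congr' ?_ tendsto_const_nhds
    filter_upwards [eventually_ge_atTop 1] with j hj using (hνuniv j hj).symm
  have hφle : ∀ A : Set E, φ A ≤ M := by
    intro A
    simp only [hφ]
    exact (ULim_mono fun j => hνle j A).trans_eq ULim_const
  have hφnull : ∀ A : Set E, MeasurableSet A → m A = 0 → φ A = 0 := by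
    intro A hA h
    simp only [hφ]
    rw [funext fun j => hνnull j A hA h]
    exact ULim_const
  -- the measure μ : the countably additive part of φ
  set μ : Measure E := Measure.ofMeasurable (fun A _ => phic φ A)
    (phic_empty hφempty)
    (fun f hm hd => phic_iUnion hφempty hφmono hφadd f hm hd) with hμdef
  have hμapp : ∀ A : Set E, MeasurableSet A → μ A = phic φ A := by
    intro A hA
    exact Measure.ofMeasurable_apply A hA
  have hμle : ∀ A : Set E, MeasurableSet A → μ A ≤ φ A := by
    intro A hA
    rw [hμapp A hA]
    exact phic_le φ hA
  haveI hμfin : IsFiniteMeasure μ := by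
    refine ⟨?_⟩
    calc μ Set.univ ≤ φ Set.univ := hμle _ MeasurableSet.univ
      _ = M := hφuniv
      _ < ⊤ := hMne.lt_top
  -- lower bound for μ univ
  have hkey : ∀ (A : Set E), MeasurableSet A → m A ≤ ε → ∀ j, 1 ≤ j → νM j A ≤ Sε := by
    intro A hA hAε j hj
    have h1 : νM j A = (j : ℝ≥0∞)⁻¹ * ∑ k ∈ Finset.range j, ∫⁻ x, iterK P k x A ∂m := by
      rw [hνapp]
      congr 1
      refine Finset.sum_congr rfl fun k _ => ?_
      simp only [hmk]
      exact Measure.bind_apply hA (hmeasIter k).aemeasurable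
    rw [h1, hSdef]
    have h2 : (j : ℝ≥0∞)⁻¹ * ∑ k ∈ Finset.range j, ∫⁻ x, iterK P k x A ∂m ≤
        ⨆ (n : ℕ) (_ : 1 ≤ n), (n : ℝ≥0∞)⁻¹ * ∑ k ∈ Finset.range n, ∫⁻ x, iterK P k x A ∂m :=
      le_iSup₂ (f := fun (n : ℕ) (_ : 1 ≤ n) =>
        (n : ℝ≥0∞)⁻¹ * ∑ k ∈ Finset.range n, ∫⁻ x, iterK P k x A ∂m) j hj
    exact h2.trans (le_iSup_of_le A (le_iSup_of_le hA (le_iSup_of_le hAε le_rfl)))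
  have hμpos : M - Sε ≤ μ Set.univ := by
    rw [hμapp Set.univ MeasurableSet.univ]
    refine le_iInf fun s => le_iInf fun hs => le_iInf fun hm' => le_iInf fun hA => ?_
    have htend : Tendsto (fun n => m (s n)ᶜ) atTop (𝓝 0) := by
      have h1 : Tendsto (fun n => m (s n)ᶜ) atTop (𝓝 (m (⋂ n, (s n)ᶜ))) :=
        tendsto_measure_iInter_atTop (fun n => (hm' n).compl.nullMeasurableSet)
          (fun n m hnm => Set.compl_subset_compl.2 (hs hnm)) ⟨0, measure_ne_top m _⟩
      have h2 : (⋂ n, (s n)ᶜ) = ∅ := by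
        rw [← Set.compl_iUnion, hA, Set.compl_univ]
      rwa [h2, measure_empty] at h1
    obtain ⟨n, hn⟩ := (htend.eventually (gt_mem_nhds hεpos)).exists
    refine le_trans ?_ (le_iSup (fun n => φ (s n)) n)
    simp only [hφ]
    refine le_ULim hU ?_
    filter_upwards [eventually_ge_atTop 1] with j hj
    rw [tsub_le_iff_right]
    have h2 : νM j (s n)ᶜ ≤ Sε := hkey _ (hm' n).compl hn.le j hj
    calc M = νM j Set.univ := (hνuniv j hj).symm
      _ = νM j (s n) + νM j (s n)ᶜ := (measure_add_measure_compl (hm' n)).symm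
      _ ≤ νM j (s n) + Sε := add_le_add_right h2 _
  -- key integral inequality
  have hL : ∀ h : E → ℝ≥0∞, Measurable h →
      ∫⁻ x, h x ∂μ ≤ ULim U (fun j => ∫⁻ x, h x ∂(νM j)) := by
    intro h hh
    rw [lintegral_eq_iSup_eapprox_lintegral hh]
    refine iSup_le fun n => ?_
    set g := SimpleFunc.eapprox h n with hg
    have hgle : ∀ a, g a ≤ h a := fun a =>
      (le_iSup (fun n => SimpleFunc.eapprox h n a) n).trans_eq
        (SimpleFunc.iSup_eapprox_apply hh a)
    have hrange : ∀ c ∈ g.range, c ≠ ⊤ := by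
      intro c hc
      obtain ⟨a, ha⟩ := SimpleFunc.mem_range.1 hc
      exact ha ▸ (SimpleFunc.eapprox_lt_top h n a).ne
    calc g.lintegral μ = ∑ c ∈ g.range, c * μ (⇑g ⁻¹' {c}) := rfl
      _ ≤ ∑ c ∈ g.range, c * φ (⇑g ⁻¹' {c}) :=
          Finset.sum_le_sum fun c _ =>
            mul_le_mul_right (hμle _ (g.measurableSet_fiber c)) c
      _ = ∑ c ∈ g.range, ULim U (fun j => c * νM j (⇑g ⁻¹' {c})) := by
          refine Finset.sum_congr rfl fun c hc => ?_
          simp only [hφ]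
          exact (ULim_const_mul (hrange c hc)).symm
      _ = ULim U (fun j => ∑ c ∈ g.range, c * νM j (⇑g ⁻¹' {c})) := (ULim_sum _ _).symm
      _ = ULim U (fun j => g.lintegral (νM j)) := rfl
      _ ≤ ULim U (fun j => ∫⁻ x, h x ∂(νM j)) := by
          refine ULim_mono fun j => ?_
          rw [← SimpleFunc.lintegral_eq_lintegral]
          exact lintegral_mono hgle
  -- sub-invariance
  have hbindφ : ∀ B : Set E, MeasurableSet B → (μ.bind ⇑P) B ≤ φ B := by
    intro B hB
    rw [Measure.bind_apply hB hmeasP.aemeasurable]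
    refine (hL _ (P.measurable_coe hB)).trans ?_
    have h2 : ∀ j, ∫⁻ x, P x B ∂(νM j) =
        (j : ℝ≥0∞)⁻¹ * ∑ k ∈ Finset.range j, mk (k + 1) B := by
      intro j
      simp only [hνM]
      rw [lintegral_smul_measure, lintegral_finset_sum_measure]
      congr 1
      refine Finset.sum_congr rfl fun k _ => ?_
      rw [← Measure.bind_apply hB hmeasP.aemeasurable, ← hsucc k]
    have h3 : ∀ j, (∫⁻ x, P x B ∂(νM j)) + (j : ℝ≥0∞)⁻¹ * m B
        = νM j B + (j : ℝ≥0∞)⁻¹ * mk j B := by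
      intro j
      rw [h2 j, hνapp, ← mul_add, ← mul_add]
      congr 1
      calc (∑ k ∈ Finset.range j, mk (k + 1) B) + m B
          = (∑ k ∈ Finset.range j, mk (k + 1) B) + mk 0 B := by rw [h0]
        _ = ∑ k ∈ Finset.range (j + 1), mk k B := (Finset.sum_range_succ' (fun k => mk k B) j).symm
        _ = (∑ k ∈ Finset.range j, mk k B) + mk j B := Finset.sum_range_succ _ j
    have hc0 : ULim U (fun j : ℕ => (j : ℝ≥0∞)⁻¹ * m B) = 0 := by
      refine ULim_of_tendsto hU ?_
      have := ENNReal.Tendsto.mul_const (ENNReal.tendsto_inv_nat_nhds_zero)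
        (Or.inr (measure_ne_top m B))
      simpa using this
    have hd0 : ULim U (fun j : ℕ => (j : ℝ≥0∞)⁻¹ * mk j B) = 0 := by
      refine le_antisymm ?_ (zero_le)
      have hle : ∀ j : ℕ, (j : ℝ≥0∞)⁻¹ * mk j B ≤ (j : ℝ≥0∞)⁻¹ * M := fun j =>
        mul_le_mul_right ((measure_mono (Set.subset_univ B)).trans (hmkuniv j).le) _
      refine (ULim_mono hle).trans ?_
      have h4 : ULim U (fun j : ℕ => (j : ℝ≥0∞)⁻¹ * M) = 0 := by
        refine ULim_of_tendsto hU ?_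
        have := ENNReal.Tendsto.mul_const (ENNReal.tendsto_inv_nat_nhds_zero) (Or.inr hMne)
        simpa using this
      exact h4.le
    have h5 : ULim U (fun j => ∫⁻ x, P x B ∂(νM j)) + ULim U (fun j : ℕ => (j : ℝ≥0∞)⁻¹ * m B)
        = ULim U (fun j => νM j B) + ULim U (fun j : ℕ => (j : ℝ≥0∞)⁻¹ * mk j B) := by
      rw [← ULim_add, ← ULim_add]
      congr 1
      funext j
      exact h3 j
    rw [hc0, hd0, add_zero, add_zero] at h5
    simp only [hφ]
    exact h5.le
  have hbindμ : ∀ A : Set E, MeasurableSet A → (μ.bind ⇑P) A ≤ μ A := by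
    intro A hA
    rw [hμapp A hA]
    exact le_phic φ (μ.bind ⇑P) hbindφ
  have hbinduniv : (μ.bind ⇑P) Set.univ = μ Set.univ := by
    rw [Measure.bind_apply MeasurableSet.univ hmeasP.aemeasurable]
    simp [measure_univ]
  have hinv : ∀ A : Set E, MeasurableSet A → (μ.bind ⇑P) A = μ A := by
    intro A hA
    refine le_antisymm (hbindμ A hA) ?_
    have h1 := measure_add_measure_compl (μ := μ.bind ⇑P) hA
    have h2 := measure_add_measure_compl (μ := μ) hA
    have h3 : μ A + μ Aᶜ ≤ (μ.bind ⇑P) A + μ Aᶜ := by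
      rw [h2, ← hbinduniv, ← h1]
      exact add_le_add_right (hbindμ Aᶜ hA.compl) _
    exact (ENNReal.add_le_add_iff_right (measure_ne_top μ Aᶜ)).1 h3
  -- conclusion
  have hacμ : μ ≪ m := by
    refine Measure.AbsolutelyContinuous.mk fun B hB h0' => ?_
    exact le_antisymm ((hμle B hB).trans (hφnull B hB h0').le) (zero_le)
  have hwd : m.withDensity (μ.rnDeriv m) = μ := Measure.withDensity_rnDeriv_eq μ m hacμ
  refine ⟨μ.rnDeriv m, Measure.measurable_rnDeriv μ m, ?_, ?_, ?_⟩
  · have h1 : ∫⁻ x, μ.rnDeriv m x ∂m = (m.withDensity (μ.rnDeriv m)) Set.univ := by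
      rw [withDensity_apply _ MeasurableSet.univ, setLIntegral_univ]
    rw [h1, hwd]
    exact measure_lt_top μ Set.univ
  · rw [hwd]
    refine Measure.measure_univ_ne_zero.1 ?_
    refine ne_of_gt (lt_of_lt_of_le ?_ hμpos)
    exact tsub_pos_iff_lt.2 hSε
  · intro A hA
    rw [hwd, ← Measure.bind_apply hA hmeasP.aemeasurable]
    exact hinv A hA
end

section
/- Let P be a Markovian kernel on (E,B) satisfying the generalized drift condition PV ≤ V − 1 + b·1_C on E for a measurable function V: E → [0,∞), a constant b ≥ 0, and a set C ∈ B. Then for every n ≥ 1, S_n(1_C) ≥ (1/b)(1 − V/n) pointwise, where S_n = (1/n)∑_{k=0}^{n-1} P^k. Consequently, for any nonzero finite measure μ, there exist n₀ and ε > 0 with inf_{n ≥ 2n₀} μ(S_n 1_C) ≥ ε/(2b) > 0. -/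
open MeasureTheory ProbabilityTheory Set Filter Topology ENNReal

lemma iterK_zero_apply' {E : Type*} [MeasurableSpace E] (P : Kernel E E) (x : E)
    {s : Set E} (hs : MeasurableSet s) :
    iterK P 0 x s = s.indicator (fun _ => 1) x := by
  simp [iterK, Kernel.deterministic_apply, Measure.dirac_apply' _ hs]; rfl

lemma iterK_succ_apply' {E : Type*} [MeasurableSpace E] (P : Kernel E E) (n : ℕ) (x : E)
    {s : Set E} (hs : MeasurableSet s) :
    iterK P (n + 1) x s = ∫⁻ y, iterK P n y s ∂(P x) := by
  show ((iterK P n).comp P) x s = _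
  exact Kernel.comp_apply' _ _ _ hs

lemma iterK_key {E : Type*} [MeasurableSpace E] (P : Kernel E E) [IsMarkovKernel P]
    (V : E → ℝ≥0∞) (hV : Measurable V) (b : ℝ≥0∞)
    (C : Set E) (hC : MeasurableSet C)
    (hdrift : ∀ x, (∫⁻ y, V y ∂(P x)) + 1 ≤ V x + b * C.indicator (fun _ => 1) x) :
    ∀ n x, (∫⁻ y, V y ∂(iterK P n x)) + n ≤
      V x + b * ∑ k ∈ Finset.range n, iterK P k x C := by
  intro n
  induction n with
  | zero =>
    intro x
    simp only [iterK, Kernel.deterministic_apply, Nat.cast_zero, add_zero,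
      Finset.range_zero, Finset.sum_empty, mul_zero, id_eq]
    rw [lintegral_dirac' _ hV]
  | succ n ih =>
    intro x
    have hWmeas : ∀ k, Measurable (fun y => iterK P k y C) :=
      fun k => (iterK P k).measurable_coe hC
    have h1 : (∫⁻ y, V y ∂(iterK P (n + 1) x)) = ∫⁻ y, (∫⁻ z, V z ∂(iterK P n y)) ∂(P x) := by
      show (∫⁻ y, V y ∂(((iterK P n).comp P) x)) = _
      rw [Kernel.lintegral_comp _ _ _ hV]
    have h2 : (∫⁻ y, (∫⁻ z, V z ∂(iterK P n y)) ∂(P x)) + n ≤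
        ∫⁻ y, V y ∂(P x) + b * ∑ k ∈ Finset.range n, iterK P (k + 1) x C := by
      calc (∫⁻ y, (∫⁻ z, V z ∂(iterK P n y)) ∂(P x)) + n
          = ∫⁻ y, ((∫⁻ z, V z ∂(iterK P n y)) + n) ∂(P x) := by
            rw [lintegral_add_right _ measurable_const, lintegral_const, measure_univ, mul_one]
        _ ≤ ∫⁻ y, (V y + b * ∑ k ∈ Finset.range n, iterK P k y C) ∂(P x) :=
            lintegral_mono fun y => ih y
        _ = ∫⁻ y, V y ∂(P x) + b * ∑ k ∈ Finset.range n, iterK P (k + 1) x C := by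
            rw [lintegral_add_right _ (by
              exact (measurable_const.mul (Finset.measurable_sum _ fun k _ => hWmeas k)))]
            congr 1
            rw [lintegral_const_mul _ (Finset.measurable_sum _ fun k _ => hWmeas k)]
            congr 1
            rw [lintegral_finset_sum _ fun k _ => hWmeas k]
            exact Finset.sum_congr rfl fun k _ => (iterK_succ_apply' P k x hC).symm
    calc (∫⁻ y, V y ∂(iterK P (n + 1) x)) + (n + 1 : ℕ)
        = ((∫⁻ y, (∫⁻ z, V z ∂(iterK P n y)) ∂(P x)) + n) + 1 := by
          rw [h1]; push_cast; ring
      _ ≤ (∫⁻ y, V y ∂(P x) + b * ∑ k ∈ Finset.range n, iterK P (k + 1) x C) + 1 :=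
          add_le_add_left h2 1
      _ = ((∫⁻ y, V y ∂(P x)) + 1) + b * ∑ k ∈ Finset.range n, iterK P (k + 1) x C := by ring
      _ ≤ (V x + b * C.indicator (fun _ => 1) x) + b * ∑ k ∈ Finset.range n, iterK P (k + 1) x C :=
          add_le_add_left (hdrift x) _
      _ = V x + b * ∑ k ∈ Finset.range (n + 1), iterK P k x C := by
          rw [Finset.sum_range_succ' (fun k => iterK P k x C) n, iterK_zero_apply' P x hC]
          ring

/-- Under the generalized drift condition `PV ≤ V − 1 + b·1_C`,
`S_n(1_C) ≥ (1/b)(1 − V/n)` pointwise, and for every nonzero finite measure `μ` there exist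
`n₀` and `ε > 0` with `μ(S_n 1_C) ≥ ε/(2b)` for all `n ≥ 2n₀`. -/
theorem stmt12 {E : Type*} [MeasurableSpace E] (P : Kernel E E) [IsMarkovKernel P]
    (V : E → ℝ≥0∞) (hV : Measurable V) (hVfin : ∀ x, V x ≠ ⊤)
    (b : ℝ≥0∞) (hb0 : 0 < b) (hb : b ≠ ⊤)
    (C : Set E) (hC : MeasurableSet C)
    (hdrift : ∀ x, (∫⁻ y, V y ∂(P x)) + 1 ≤ V x + b * C.indicator (fun _ => 1) x) :
    (∀ n : ℕ, 1 ≤ n → ∀ x,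
      (1 - V x / n) / b ≤ (n : ℝ≥0∞)⁻¹ * ∑ k ∈ Finset.range n, iterK P k x C) ∧
    ∀ μ : Measure E, IsFiniteMeasure μ → μ ≠ 0 →
      ∃ n₀ : ℕ, 1 ≤ n₀ ∧ ∃ ε : ℝ≥0∞, 0 < ε ∧
        ∀ n : ℕ, 2 * n₀ ≤ n →
          ε / (2 * b) ≤ ∫⁻ x, (n : ℝ≥0∞)⁻¹ * ∑ k ∈ Finset.range n, iterK P k x C ∂μ := by
  have part1 : ∀ n : ℕ, 1 ≤ n → ∀ x,
      (1 - V x / n) / b ≤ (n : ℝ≥0∞)⁻¹ * ∑ k ∈ Finset.range n, iterK P k x C := by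
    intro n hn x
    set S : ℝ≥0∞ := ∑ k ∈ Finset.range n, iterK P k x C with hSdef
    have hn0 : (n : ℝ≥0∞) ≠ 0 := Nat.cast_ne_zero.mpr (by omega)
    have hnt : (n : ℝ≥0∞) ≠ ⊤ := natCast_ne_top n
    have hS : (n : ℝ≥0∞) ≤ V x + b * S :=
      le_add_self.trans (iterK_key P V hV b C hC hdrift n x)
    apply ENNReal.div_le_of_le_mul
    calc (1 : ℝ≥0∞) - V x / n
        ≤ ((n : ℝ≥0∞) - V x) / n := by
          apply tsub_le_iff_right.mpr
          rw [ENNReal.div_add_div_same, ENNReal.le_div_iff_mul_le (Or.inl hn0) (Or.inl hnt),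
            one_mul]
          exact le_tsub_add
      _ ≤ (b * S) / n := ENNReal.div_le_div_right (tsub_le_iff_right.mpr (hS.trans_eq (add_comm _ _))) n
      _ = ((n : ℝ≥0∞)⁻¹ * S) * b := by rw [div_eq_mul_inv]; ring
  refine ⟨part1, ?_⟩
  intro μ _ hμ
  have hA : ∀ m : ℕ, MeasurableSet (V ⁻¹' Iic (m : ℝ≥0∞)) := fun m => hV measurableSet_Iic
  have hcov : (⋃ m : ℕ, V ⁻¹' Iic (m : ℝ≥0∞)) = univ := by
    apply eq_univ_of_forall
    intro x
    obtain ⟨m, hm⟩ := ENNReal.exists_nat_gt (hVfin x)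
    exact mem_iUnion.2 ⟨m, hm.le⟩
  have hmono : Monotone fun m : ℕ => V ⁻¹' Iic (m : ℝ≥0∞) := fun i j hij =>
    preimage_mono (Iic_subset_Iic.mpr (by exact_mod_cast hij))
  have hsup : (⨆ m : ℕ, μ (V ⁻¹' Iic (m : ℝ≥0∞))) = μ univ := by
    rw [← hcov]; exact (Directed.measure_iUnion (μ := μ) hmono.directed_le).symm
  have hpos : 0 < μ univ := Measure.measure_univ_pos.mpr hμ
  obtain ⟨m, hm⟩ : ∃ m : ℕ, 0 < μ (V ⁻¹' Iic (m : ℝ≥0∞)) := by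
    by_contra h
    push_neg at h
    simp only [nonpos_iff_eq_zero] at h
    rw [← hsup] at hpos
    simp [h] at hpos
  refine ⟨max m 1, le_max_right m 1, μ (V ⁻¹' Iic (m : ℝ≥0∞)), hm, ?_⟩
  intro n hn
  set n₀ : ℕ := max m 1 with hn₀
  have hn1 : 1 ≤ n := le_trans (by omega : 1 ≤ 2 * n₀) hn
  have hn0 : (n : ℝ≥0∞) ≠ 0 := Nat.cast_ne_zero.mpr (by omega)
  have hnt : (n : ℝ≥0∞) ≠ ⊤ := natCast_ne_top n
  set f : E → ℝ≥0∞ := fun x => (n : ℝ≥0∞)⁻¹ * ∑ k ∈ Finset.range n, iterK P k x C with hf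
  have hfmeas : Measurable f :=
    measurable_const.mul (Finset.measurable_sum _ fun k _ => (iterK P k).measurable_coe hC)
  have hpoint : ∀ x ∈ V ⁻¹' Iic (m : ℝ≥0∞), (2 * b)⁻¹ ≤ f x := by
    intro x hx
    have hVx : V x ≤ (m : ℝ≥0∞) := hx
    have hdivle : V x / n ≤ 2⁻¹ := by
      calc V x / n ≤ (m : ℝ≥0∞) / n := ENNReal.div_le_div_right hVx n
        _ ≤ 2⁻¹ := by
          rw [ENNReal.div_le_iff_le_mul (Or.inl hn0) (Or.inr (by norm_num))]
          calc (m : ℝ≥0∞) = 2⁻¹ * (2 * m) := by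
                rw [← mul_assoc, ENNReal.inv_mul_cancel (by norm_num) (by norm_num), one_mul]
            _ ≤ 2⁻¹ * n := by
                apply mul_le_mul_right
                have : ((2 * m : ℕ) : ℝ≥0∞) ≤ (n : ℝ≥0∞) := by
                  exact_mod_cast le_trans (by omega : 2 * m ≤ 2 * n₀) hn
                push_cast at this
                exact this
    have h12 : (2 : ℝ≥0∞)⁻¹ ≤ 1 - V x / n := by
      apply ENNReal.le_sub_of_add_le_left (ne_top_of_le_ne_top (by norm_num) hdivle)
      rw [add_comm]
      calc (2 : ℝ≥0∞)⁻¹ + V x / n ≤ 2⁻¹ + 2⁻¹ := add_le_add_right hdivle _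
        _ = 1 := ENNReal.inv_two_add_inv_two
    calc (2 * b)⁻¹ = 2⁻¹ / b := by
          rw [ENNReal.mul_inv (Or.inl (by norm_num)) (Or.inl (by norm_num)), div_eq_mul_inv]
      _ ≤ (1 - V x / n) / b := ENNReal.div_le_div_right h12 b
      _ ≤ f x := part1 n hn1 x
  calc μ (V ⁻¹' Iic (m : ℝ≥0∞)) / (2 * b)
      = (2 * b)⁻¹ * μ (V ⁻¹' Iic (m : ℝ≥0∞)) := by rw [div_eq_mul_inv, mul_comm]
    _ = ∫⁻ x in V ⁻¹' Iic (m : ℝ≥0∞), (2 * b)⁻¹ ∂μ := (setLIntegral_const _ _).symm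
    _ ≤ ∫⁻ x in V ⁻¹' Iic (m : ℝ≥0∞), f x ∂μ := setLIntegral_mono hfmeas hpoint
    _ ≤ ∫⁻ x, f x ∂μ := setLIntegral_le_lintegral _ _
end

section
/- Let P be a Markovian kernel on (E,B) satisfying: (i) there exist a finite positive measure m, a set C ∈ B, a function φ: B₁⁺ → ℝ₊ (B₁⁺ the measurable functions with 0 ≤ f ≤ 1), and a measurable γ: E → ℝ₊ such that Pf(x) ≤ φ(f) + γ(x) for all x ∈ C and f ∈ B₁⁺; (ii) sup_{n ≥ n₀} m(S_{n}(1_C(γ−1))) < 0 for some n₀. Then there exist δ ∈ [0,1) and n₁ such that m(S_n f) ≤ m(E)·φ(f) + δ·m(E) for all f ∈ B₁⁺ and n ≥ n₁, where S_n = (1/n)∑_{k=0}^{n-1} P^k. -/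
open MeasureTheory ProbabilityTheory Set Filter Topology ENNReal

section aux
variable {E : Type*} [MeasurableSpace E]

instance iterK_markov (P : Kernel E E) [IsMarkovKernel P] (n : ℕ) :
    IsMarkovKernel (iterK P n) := by
  induction n with
  | zero => rw [iterK]; infer_instance
  | succ n ih => rw [iterK]; exact Kernel.IsMarkovKernel.comp _ _

lemma iterK_succ_eq (P : Kernel E E) [IsMarkovKernel P] (n : ℕ) :
    iterK P (n + 1) = P.comp (iterK P n) := by
  induction n with
  | zero =>
    show (iterK P 0).comp P = P.comp (iterK P 0)
    rw [iterK, Kernel.deterministic_comp_eq_map, Kernel.comp_deterministic_eq_comap]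
    simp [Kernel.map_id, Kernel.comap_id]
  | succ n ih =>
    show (iterK P (n + 1)).comp P = P.comp (iterK P (n + 1))
    conv_lhs => rw [ih]
    rw [Kernel.comp_assoc]
    rfl

lemma integrable_of_bdd {μ : Measure E} [IsFiniteMeasure μ] {f : E → ℝ}
    (hm : AEStronglyMeasurable f μ) (B : ℝ) (hb : ∀ x, |f x| ≤ B) : Integrable f μ :=
  Integrable.mono' (integrable_const B) hm (Filter.Eventually.of_forall hb)

lemma my_integral_comp (η κ : Kernel E E) [IsMarkovKernel η] [IsMarkovKernel κ] (x : E)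
    {f : E → ℝ} (hf : Measurable f) (B : ℝ) (hb : ∀ y, |f y| ≤ B) :
    ∫ y, f y ∂((η.comp κ) x) = ∫ z, ∫ y, f y ∂(η z) ∂(κ x) := by
  rw [Kernel.comp_eq_snd_compProd, Kernel.snd_apply,
    integral_map measurable_snd.aemeasurable hf.aestronglyMeasurable]
  have hint : Integrable (fun p : E × E => f p.2)
      ((κ ⊗ₖ Kernel.prodMkLeft E η) x) :=
    integrable_of_bdd (hf.comp measurable_snd).aestronglyMeasurable B (fun p => hb p.2)
  rw [ProbabilityTheory.integral_compProd hint]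
  simp [Kernel.prodMkLeft_apply]

lemma meas_kernel_integral (κ : Kernel E E) [IsSFiniteKernel κ] {f : E → ℝ}
    (hf : Measurable f) : Measurable fun x => ∫ y, f y ∂(κ x) :=
  (StronglyMeasurable.integral_kernel_prod_right' (κ := κ)
    (hf.comp measurable_snd).stronglyMeasurable).measurable

end aux

/-- Under Assumption C (a Harnack-type bound `Pf ≤ φ(f) + γ` on a set `C` together with
`sup_{n ≥ n₀} m(S_n(1_C(γ−1))) < 0`), there are `δ ∈ [0,1)` and `n₁` such that
`m(S_n f) ≤ m(E)·φ(f) + δ·m(E)` for all `0 ≤ f ≤ 1` and `n ≥ n₁`. -/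
theorem stmt13 {E : Type*} [MeasurableSpace E] (P : Kernel E E) [IsMarkovKernel P]
    (m : Measure E) [IsFiniteMeasure m]
    (C : Set E) (hC : MeasurableSet C)
    (φ : (E → ℝ) → ℝ) (hφ : ∀ f, 0 ≤ φ f)
    (γ : E → ℝ) (hγ : ∀ x, 0 ≤ γ x) (hγm : Measurable γ)
    (hi : ∀ x ∈ C, ∀ f : E → ℝ, Measurable f → (∀ y, 0 ≤ f y ∧ f y ≤ 1) →
      ∫ y, f y ∂(P x) ≤ φ f + γ x)
    (n₀ : ℕ) (c : ℝ) (hcneg : c < 0)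
    (hii : ∀ n : ℕ, n₀ ≤ n →
      ∫ x, (1 / (n : ℝ)) *
          ∑ k ∈ Finset.range n,
            ∫ y, C.indicator (fun z => γ z - 1) y ∂(iterK P k x) ∂m ≤ c) :
    ∃ δ : ℝ, 0 ≤ δ ∧ δ < 1 ∧ ∃ n₁ : ℕ,
      ∀ f : E → ℝ, Measurable f → (∀ y, 0 ≤ f y ∧ f y ≤ 1) →
        ∀ n : ℕ, n₁ ≤ n →
          ∫ x, (1 / (n : ℝ)) *
              ∑ k ∈ Finset.range n, ∫ y, f y ∂(iterK P k x) ∂m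
            ≤ (m Set.univ).toReal * φ f + δ * (m Set.univ).toReal := by
  set g : E → ℝ := C.indicator (fun z => γ z - 1) with hg_def
  have hgm : Measurable g := (hγm.sub measurable_const).indicator hC
  have hglb : ∀ y, -1 ≤ g y := by
    intro y
    by_cases hy : y ∈ C
    · simp only [hg_def, indicator_of_mem hy]; linarith [hγ y]
    · simp only [hg_def, indicator_of_notMem hy]; norm_num
  set h : ℕ → E → ℝ := fun k x => ∫ y, g y ∂(iterK P k x) with hh_def
  have hhm : ∀ k, Measurable (h k) := fun k => meas_kernel_integral _ hgm
  have hhlb : ∀ k x, -1 ≤ h k x := by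
    intro k x
    by_cases hint : Integrable g (iterK P k x)
    · have : ∫ y, (-1 : ℝ) ∂(iterK P k x) ≤ ∫ y, g y ∂(iterK P k x) :=
        integral_mono (integrable_const _) hint hglb
      simpa using this
    · simp only [hh_def, integral_undef hint]; norm_num
  set M : ℝ := (m Set.univ).toReal with hM_def
  have hMnn : 0 ≤ M := ENNReal.toReal_nonneg
  have hMpos : 0 < M := by
    rcases lt_or_eq_of_le hMnn with h' | h'
    · exact h'
    have hm0 : m = 0 := by
      have := (ENNReal.toReal_eq_zero_iff _).mp h'.symm
      rcases this with h'' | h''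
      · exact Measure.measure_univ_eq_zero.mp h''
      · exact absurd h'' (measure_ne_top m _)
    have := hii n₀ le_rfl
    rw [hm0] at this
    simp at this
    linarith
  -- each `h k` is integrable with respect to `m`
  have hhint : ∀ k, Integrable (h k) m := by
    intro k
    set N : ℕ := max (max n₀ (k + 1)) 1 with hN_def
    have hN0 : n₀ ≤ N := le_trans (le_max_left _ _) (le_max_left _ _)
    have hNk : k < N :=
      lt_of_lt_of_le (Nat.lt_succ_self k) (le_trans (le_max_right _ _) (le_max_left _ _))
    have hN1 : 1 ≤ N := le_max_right _ _
    have hNpos : (0 : ℝ) < (N : ℝ) := by exact_mod_cast hN1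
    set F : E → ℝ := fun x => ∑ j ∈ Finset.range N, h j x with hF_def
    have hkey := hii N hN0
    have hFint' : Integrable (fun x => (1 / (N : ℝ)) * F x) m := by
      by_contra hni
      rw [integral_undef hni] at hkey
      linarith
    have hFint : Integrable F m := by
      have := hFint'.const_mul (N : ℝ)
      have heq : (fun x => (N : ℝ) * ((1 / (N : ℝ)) * F x)) = F := by
        funext x; field_simp
      rwa [heq] at this
    refine Integrable.mono' (hFint.abs.add (integrable_const (N : ℝ)))
      (hhm k).aestronglyMeasurable (Filter.Eventually.of_forall fun x => ?_)
    have hsplit : h k x = F x - ∑ j ∈ (Finset.range N).erase k, h j x := by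
      have := Finset.sum_erase_add (Finset.range N) (fun j => h j x)
        (Finset.mem_range.mpr hNk)
      simp only [hF_def]
      linarith [this]
    have herase_lb : -(N : ℝ) + 1 ≤ ∑ j ∈ (Finset.range N).erase k, h j x := by
      have hcard : ((Finset.range N).erase k).card = N - 1 := by
        rw [Finset.card_erase_of_mem (Finset.mem_range.mpr hNk), Finset.card_range]
      have hsum : ∑ j ∈ (Finset.range N).erase k, (-1 : ℝ) ≤
          ∑ j ∈ (Finset.range N).erase k, h j x :=
        Finset.sum_le_sum (fun j _ => hhlb j x)
      rw [Finset.sum_const, nsmul_eq_mul, hcard] at hsum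
      have hc : ((N - 1 : ℕ) : ℝ) = (N : ℝ) - 1 := by
        rw [Nat.cast_sub hN1]; norm_num
      rw [hc] at hsum
      linarith
    have hub : h k x ≤ |F x| + N := by
      rw [hsplit]
      have : F x ≤ |F x| := le_abs_self _
      linarith
    have hlb : -(|F x| + N) ≤ h k x := by
      have h1 : (1 : ℝ) ≤ N := by exact_mod_cast hN1
      have h2 : (0 : ℝ) ≤ |F x| := abs_nonneg _
      linarith [hhlb k x]
    rw [Real.norm_eq_abs, abs_le]
    exact ⟨hlb, hub⟩
  set I : ℕ → ℝ := fun k => ∫ x, h k x ∂m with hI_def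
  have hIsum : ∀ n : ℕ, n₀ ≤ n → 1 ≤ n → ∑ k ∈ Finset.range n, I k ≤ n * c := by
    intro n hn0 hn1
    have hnpos : (0 : ℝ) < (n : ℝ) := by exact_mod_cast hn1
    have hkey := hii n hn0
    rw [integral_const_mul, integral_finset_sum _ (fun k _ => hhint k)] at hkey
    have hkey' : 1 / (n : ℝ) * ∑ k ∈ Finset.range n, I k ≤ c := hkey
    calc ∑ k ∈ Finset.range n, I k
        = (n : ℝ) * (1 / (n : ℝ) * ∑ k ∈ Finset.range n, I k) := by field_simp
      _ ≤ (n : ℝ) * c := mul_le_mul_of_nonneg_left hkey' hnpos.le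
  -- choose δ
  refine ⟨max 0 (1 + c / (2 * M)), le_max_left _ _, ?_, max (n₀ + 1) 2, ?_⟩
  · refine max_lt one_pos ?_
    have : c / (2 * M) < 0 := div_neg_of_neg_of_pos hcneg (by linarith)
    linarith
  set δ : ℝ := max 0 (1 + c / (2 * M)) with hδ_def
  have hδM : M + c / 2 ≤ δ * M := by
    have h1 : 1 + c / (2 * M) ≤ δ := le_max_right _ _
    have h2 : (1 + c / (2 * M)) * M ≤ δ * M := mul_le_mul_of_nonneg_right h1 hMnn
    have h3 : (1 + c / (2 * M)) * M = M + c / 2 := by field_simp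
    linarith
  intro f hf hf01 n hn
  have hfb : ∀ y, |f y| ≤ 1 := fun y => abs_le.mpr ⟨by linarith [(hf01 y).1], (hf01 y).2⟩
  set u : ℕ → E → ℝ := fun k x => ∫ y, f y ∂(iterK P k x) with hu_def
  have hum : ∀ k, Measurable (u k) := fun k => meas_kernel_integral _ hf
  have hu01 : ∀ k x, 0 ≤ u k x ∧ u k x ≤ 1 := by
    intro k x
    constructor
    · exact integral_nonneg fun y => (hf01 y).1
    · have hfi : Integrable f (iterK P k x) :=
        integrable_of_bdd hf.aestronglyMeasurable 1 hfb
      have := integral_mono hfi (integrable_const 1) (fun y => (hf01 y).2)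
      simpa using this
  set v : E → ℝ := fun z => ∫ y, f y ∂(P z) with hv_def
  have hvm : Measurable v := meas_kernel_integral _ hf
  have hv01 : ∀ z, 0 ≤ v z ∧ v z ≤ 1 := by
    intro z
    constructor
    · exact integral_nonneg fun y => (hf01 y).1
    · have hfi : Integrable f (P z) := integrable_of_bdd hf.aestronglyMeasurable 1 hfb
      have := integral_mono hfi (integrable_const 1) (fun y => (hf01 y).2)
      simpa using this
  have hA : ∀ z, v z ≤ φ f + 1 + g z := by
    intro z
    by_cases hz : z ∈ C
    · have := hi z hz f hf hf01
      simp only [hg_def, indicator_of_mem hz]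
      simp only [hv_def]
      linarith
    · simp only [hg_def, indicator_of_notMem hz]
      linarith [(hv01 z).2, hφ f]
  have hB : ∀ k x, u (k + 1) x ≤ φ f + 1 + h k x := by
    intro k x
    have hcomp : u (k + 1) x = ∫ z, v z ∂(iterK P k x) := by
      show ∫ y, f y ∂(iterK P (k + 1) x) = _
      rw [iterK_succ_eq P k]
      exact my_integral_comp P (iterK P k) x hf 1 hfb
    rw [hcomp]
    have hvint : Integrable v (iterK P k x) :=
      integrable_of_bdd hvm.aestronglyMeasurable 1
        (fun z => abs_le.mpr ⟨by linarith [(hv01 z).1], (hv01 z).2⟩)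
    by_cases hint : Integrable g (iterK P k x)
    · have hint2 : Integrable (fun z => φ f + 1 + g z) (iterK P k x) :=
        (integrable_const (φ f + 1)).add hint
      have hmono := integral_mono hvint hint2 (fun z => hA z)
      rw [integral_add (integrable_const _) hint, integral_const] at hmono
      simp only [probReal_univ, one_smul] at hmono
      simp only [hh_def]
      linarith
    · have h0 : h k x = 0 := by simp only [hh_def, integral_undef hint]
      rw [h0]
      have hle : ∫ z, v z ∂(iterK P k x) ≤ 1 := by
        have := integral_mono hvint (integrable_const 1) (fun z => (hv01 z).2)
        simpa using this
      linarith [hφ f]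
  have hum_int : ∀ k, Integrable (u k) m := fun k =>
    integrable_of_bdd (hum k).aestronglyMeasurable 1
      (fun x => abs_le.mpr ⟨by linarith [(hu01 k x).1], (hu01 k x).2⟩)
  have hstep : ∀ k, ∫ x, u (k + 1) x ∂m ≤ (φ f + 1) * M + I k := by
    intro k
    have hint2 : Integrable (fun x => φ f + 1 + h k x) m :=
      (integrable_const (φ f + 1)).add (hhint k)
    have hmono := integral_mono (hum_int (k + 1)) hint2 (fun x => hB k x)
    rw [integral_add (integrable_const _) (hhint k), integral_const] at hmono
    simp only [smul_eq_mul] at hmono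
    have : m.real Set.univ * (φ f + 1) = (φ f + 1) * M := by rw [hM_def, measureReal_def]; ring
    linarith [hmono]
  -- final assembly
  obtain ⟨p, rfl⟩ : ∃ p, n = p + 1 := ⟨n - 1, by omega⟩
  have hp0 : n₀ ≤ p := by omega
  have hp1 : 1 ≤ p := by omega
  have ha2 : (2 : ℝ) ≤ ((p + 1 : ℕ) : ℝ) := by exact_mod_cast (by omega : 2 ≤ p + 1)
  have hapos : (0 : ℝ) < ((p + 1 : ℕ) : ℝ) := by linarith
  rw [integral_const_mul, integral_finset_sum _ (fun k _ => hum_int k)]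
  have hu0 : ∫ x, u 0 x ∂m ≤ M := by
    have := integral_mono (hum_int 0) (integrable_const 1) (fun x => (hu01 0 x).2)
    simpa [hM_def, smul_eq_mul, measureReal_def] using this
  have hsum_bound : ∑ k ∈ Finset.range (p + 1), ∫ x, u k x ∂m
      ≤ M + (p : ℝ) * ((φ f + 1) * M) + (p : ℝ) * c := by
    rw [Finset.sum_range_succ']
    have h1 : ∑ k ∈ Finset.range p, ∫ x, u (k + 1) x ∂m
        ≤ ∑ k ∈ Finset.range p, ((φ f + 1) * M + I k) :=
      Finset.sum_le_sum (fun k _ => hstep k)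
    have h2 : ∑ k ∈ Finset.range p, ((φ f + 1) * M + I k)
        = (p : ℝ) * ((φ f + 1) * M) + ∑ k ∈ Finset.range p, I k := by
      rw [Finset.sum_add_distrib, Finset.sum_const, Finset.card_range, nsmul_eq_mul]
    have h3 : ∑ k ∈ Finset.range p, I k ≤ (p : ℝ) * c := hIsum p hp0 hp1
    linarith
  set a : ℝ := ((p + 1 : ℕ) : ℝ) with ha_def
  have hpa : (p : ℝ) = a - 1 := by rw [ha_def]; push_cast; ring
  have hgoal : 1 / a * (∑ k ∈ Finset.range (p + 1), ∫ x, u k x ∂m)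
      ≤ 1 / a * (M + (a - 1) * ((φ f + 1) * M) + (a - 1) * c) := by
    apply mul_le_mul_of_nonneg_left _ (by positivity)
    rw [← hpa]; exact hsum_bound
  refine le_trans hgoal ?_
  rw [one_div, inv_mul_le_iff₀ hapos]
  have h1 : 0 ≤ M * φ f := mul_nonneg hMnn (hφ f)
  have h2 : 0 ≤ c * (1 - a / 2) := by
    nlinarith [mul_nonneg (le_of_lt (neg_pos.mpr hcneg)) (by linarith : (0:ℝ) ≤ a / 2 - 1)]
  have h3 : a * (M + c / 2) ≤ a * (δ * M) := mul_le_mul_of_nonneg_left hδM hapos.le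
  nlinarith [h1, h2, h3]
end

section
/- Let P be a Markovian kernel on a separable metric space E with Borel σ-algebra B, m a finite measure, φ: [0,∞) → [0,∞) continuous with φ(0) = 0 admitting an increasing inverse φ⁻¹, and δ ∈ [0,1), such that Pf(x) ≤ φ(m(f)) + δ for all x ∈ E and all measurable f with 0 ≤ f ≤ 1. Then every absorbing set A ∈ B (i.e. P(x,A) = 1 for all x ∈ A) that is nonempty satisfies m(A) ≥ φ⁻¹(1−δ). Consequently the number of mutually singular invariant probability measures is at most m(E)/φ⁻¹(1−δ). -/
open MeasureTheory ProbabilityTheory Set Filter Topology ENNReal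


-- full-measure intersection helper
lemma inter_full {E : Type*} [MeasurableSpace E] (ν : Measure E) [IsProbabilityMeasure ν]
    {s t : Set E} (hs : MeasurableSet s) (ht : MeasurableSet t)
    (h1 : ν s = 1) (h2 : ν t = 1) : ν (s ∩ t) = 1 := by
  rw [← prob_compl_eq_zero_iff (hs.inter ht), Set.compl_inter]
  refine measure_union_null ?_ ?_
  · rw [prob_compl_eq_zero_iff hs]; exact h1
  · rw [prob_compl_eq_zero_iff ht]; exact h2

lemma absorb_aux {E : Type*} [MeasurableSpace E] (P : Kernel E E) [IsMarkovKernel P]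
    (ν : Measure E) [IsProbabilityMeasure ν]
    (hinv : ∀ A : Set E, MeasurableSet A → ∫⁻ x, P x A ∂ν = ν A)
    (C : Set E) (hC : MeasurableSet C) (hνC : ν C = 1) :
    ∃ A : Set E, A ⊆ C ∧ MeasurableSet A ∧ ν A = 1 ∧ ∀ x ∈ A, P x A = 1 := by
  -- one step: almost every point satisfies P x D = 1
  have step : ∀ D : Set E, MeasurableSet D → ν D = 1 → ν {x | P x D = 1} = 1 := by
    intro D hD hνD
    have hmeas : Measurable fun x => P x D := P.measurable_coe hD
    have hle : ∀ x, P x D ≤ 1 := fun x => prob_le_one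
    have hint : ∫⁻ x, P x D ∂ν = 1 := by rw [hinv D hD, hνD]
    have hsub : ∫⁻ x, (1 - P x D) ∂ν = 0 := by
      rw [lintegral_sub hmeas (by simp [hint]) (Filter.Eventually.of_forall hle)]
      simp [hint]
    have hae : ∀ᵐ x ∂ν, (1 : ℝ≥0∞) - P x D = 0 := by
      exact (lintegral_eq_zero_iff (measurable_const.sub hmeas)).mp hsub
    have : ∀ᵐ x ∂ν, P x D = 1 := by
      filter_upwards [hae] with x hx
      have := tsub_eq_zero_iff_le.mp hx
      exact le_antisymm (hle x) this
    have hT : MeasurableSet {x | P x D = 1} :=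
      hmeas (measurableSet_singleton 1)
    rw [← prob_compl_eq_zero_iff hT]
    exact this
  -- iterate
  let D : ℕ → Set E := fun n => Nat.rec C (fun _ Dn => Dn ∩ {x | P x Dn = 1}) n
  have hDsucc : ∀ n, D (n + 1) = D n ∩ {x | P x (D n) = 1} := fun n => rfl
  have hDmeas : ∀ n, MeasurableSet (D n) := by
    intro n; induction n with
    | zero => exact hC
    | succ n ih => exact ih.inter ((P.measurable_coe ih) (measurableSet_singleton 1))
  have hDfull : ∀ n, ν (D n) = 1 := by
    intro n; induction n with
    | zero => exact hνC
    | succ n ih =>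
      exact inter_full ν (hDmeas n) ((P.measurable_coe (hDmeas n)) (measurableSet_singleton 1))
        ih (step (D n) (hDmeas n) ih)
  have hanti : Antitone D := antitone_nat_of_succ_le fun n => by
    rw [hDsucc n]; exact Set.inter_subset_left
  refine ⟨⋂ n, D n, Set.iInter_subset D 0, MeasurableSet.iInter hDmeas, ?_, ?_⟩
  · rw [← prob_compl_eq_zero_iff (MeasurableSet.iInter hDmeas), Set.compl_iInter]
    refine measure_iUnion_null fun n => ?_
    rw [prob_compl_eq_zero_iff (hDmeas n)]; exact hDfull n
  · intro x hx
    have hx' : ∀ n, x ∈ D n := fun n => Set.mem_iInter.mp hx n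
    have hPx : ∀ n, P x (D n) = 1 := by
      intro n
      have := hx' (n + 1)
      rw [hDsucc n] at this
      exact this.2
    rw [hanti.measure_iInter (fun n => (hDmeas n).nullMeasurableSet)
      ⟨0, by simp [hPx 0]⟩]
    simp [hPx]

/-- If `Pf(x) ≤ φ(m(f)) + δ` globally, then every nonempty absorbing set `A` satisfies
`m(A) ≥ φ⁻¹(1−δ)`, and consequently the number of mutually singular invariant probability
measures is at most `m(E)/φ⁻¹(1−δ)`. -/
theorem stmt14 {E : Type*} [MetricSpace E] [TopologicalSpace.SeparableSpace E]
    [MeasurableSpace E] [BorelSpace E]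
    (P : Kernel E E) [IsMarkovKernel P]
    (m : Measure E) [IsFiniteMeasure m]
    (φ ψ : ℝ → ℝ) (hφcont : ContinuousOn φ (Set.Ici 0)) (hφ0 : φ 0 = 0)
    (hφpos : ∀ x : ℝ, 0 ≤ x → 0 ≤ φ x)
    (hψmono : StrictMono ψ) (hψinv : ∀ x : ℝ, 0 ≤ x → ψ (φ x) = x)
    (δ : ℝ) (hδ0 : 0 ≤ δ) (hδ1 : δ < 1)
    (hP : ∀ x : E, ∀ f : E → ℝ, Measurable f → (∀ y, 0 ≤ f y ∧ f y ≤ 1) →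
      ∫ y, f y ∂(P x) ≤ φ (∫ y, f y ∂m) + δ) :
    (∀ A : Set E, MeasurableSet A → A.Nonempty → (∀ x ∈ A, P x A = 1) →
      ENNReal.ofReal (ψ (1 - δ)) ≤ m A) ∧
    ∀ S : Finset (Measure E),
      (∀ ν ∈ S, IsProbabilityMeasure ν) →
      (∀ ν ∈ S, ∀ A : Set E, MeasurableSet A → ∫⁻ x, P x A ∂ν = ν A) →
      (∀ ν ∈ S, ∀ ν' ∈ S, ν ≠ ν' → ν.MutuallySingular ν') →
      (S.card : ℝ) ≤ (m Set.univ).toReal / ψ (1 - δ) := by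
  classical
  have hψ0 : ψ 0 = 0 := by have := hψinv 0 le_rfl; rwa [hφ0] at this
  have hψpos : 0 < ψ (1 - δ) := by
    rw [← hψ0]; exact hψmono (by linarith)
  -- Part 1
  have part1 : ∀ A : Set E, MeasurableSet A → A.Nonempty → (∀ x ∈ A, P x A = 1) →
      ENNReal.ofReal (ψ (1 - δ)) ≤ m A := by
    intro A hA ⟨x, hx⟩ habs
    have hf : Measurable (A.indicator (1 : E → ℝ)) := measurable_const.indicator hA
    have hfb : ∀ y, 0 ≤ A.indicator (1 : E → ℝ) y ∧ A.indicator (1 : E → ℝ) y ≤ 1 := by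
      intro y; unfold Set.indicator; split <;> norm_num
    have key := hP x (A.indicator 1) hf hfb
    rw [integral_indicator_one hA, integral_indicator_one hA, measureReal_def, measureReal_def, habs x hx] at key
    simp only [ENNReal.toReal_one] at key
    have h1 : 1 - δ ≤ φ (m A).toReal := by linarith
    have h2 : ψ (1 - δ) ≤ (m A).toReal := by
      calc ψ (1 - δ) ≤ ψ (φ (m A).toReal) := hψmono.monotone h1
        _ = (m A).toReal := hψinv _ ENNReal.toReal_nonneg
    exact ENNReal.ofReal_le_of_le_toReal h2
  refine ⟨part1, ?_⟩
  intro S hprob hinv hsing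
  -- choose singularity witnesses
  have hexists : ∀ ν ν' : Measure E, ∃ t : Set E, MeasurableSet t ∧
      (ν ∈ S → ν' ∈ S → ν ≠ ν' → ν t = 0 ∧ ν' tᶜ = 0) := by
    intro ν ν'
    by_cases h : ν ∈ S ∧ ν' ∈ S ∧ ν ≠ ν'
    · obtain ⟨t, ht, h1, h2⟩ := hsing ν h.1 ν' h.2.1 h.2.2
      exact ⟨t, ht, fun _ _ _ => ⟨h1, h2⟩⟩
    · exact ⟨∅, MeasurableSet.empty, fun a b c => absurd ⟨a, b, c⟩ h⟩
  choose t htmeas ht using hexists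
  -- carriers
  set C : Measure E → Set E := fun ν => ⋂ ν' ∈ S.erase ν, ((t ν ν')ᶜ ∩ t ν' ν) with hCdef
  have hCmeas : ∀ ν, MeasurableSet (C ν) := by
    intro ν
    exact Finset.measurableSet_biInter _ fun ν' _ => (htmeas ν ν').compl.inter (htmeas ν' ν)
  have hCfull : ∀ ν ∈ S, ν (C ν) = 1 := by
    intro ν hν
    have := hprob ν hν
    rw [← prob_compl_eq_zero_iff (hCmeas ν), hCdef]
    simp only [Set.compl_iInter]
    refine measure_biUnion_null_iff (S.erase ν).countable_toSet |>.mpr ?_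
    intro ν' hν'
    simp only [Finset.coe_erase, Set.mem_diff, Finset.mem_coe, Set.mem_singleton_iff] at hν'
    have h1 : ν (t ν ν') = 0 := (ht ν ν' hν hν'.1 (Ne.symm hν'.2)).1
    have h2 : ν (t ν' ν)ᶜ = 0 := (ht ν' ν hν'.1 hν hν'.2).2
    rw [Set.compl_inter, compl_compl]
    exact measure_union_null h1 h2
  have hCdisj : ∀ ν ∈ S, ∀ ν' ∈ S, ν ≠ ν' → Disjoint (C ν) (C ν') := by
    intro ν hν ν' hν' hne
    have h1 : C ν ⊆ (t ν ν')ᶜ := by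
      refine Set.iInter₂_subset_of_subset ν' (Finset.mem_erase.mpr ⟨Ne.symm hne, hν'⟩) ?_
      exact Set.inter_subset_left
    have h2 : C ν' ⊆ t ν ν' := by
      refine Set.iInter₂_subset_of_subset ν (Finset.mem_erase.mpr ⟨hne, hν⟩) ?_
      exact Set.inter_subset_right
    exact Set.disjoint_of_subset h1 h2 disjoint_compl_left
  -- absorbing subsets
  have habs : ∀ ν ∈ S, ∃ A : Set E, A ⊆ C ν ∧ MeasurableSet A ∧ ν A = 1 ∧
      ∀ x ∈ A, P x A = 1 := by
    intro ν hν
    have := hprob ν hν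
    exact absorb_aux P ν (hinv ν hν) (C ν) (hCmeas ν) (hCfull ν hν)
  choose! A hAC hAmeas hAfull hAabs using habs
  -- each A ν has m-measure at least r
  set r : ℝ≥0∞ := ENNReal.ofReal (ψ (1 - δ)) with hr
  have hmA : ∀ ν ∈ S, r ≤ m (A ν) := by
    intro ν hν
    refine part1 (A ν) (hAmeas ν hν) ?_ (hAabs ν hν)
    refine nonempty_of_measure_ne_zero (μ := ν) ?_
    rw [hAfull ν hν]; exact one_ne_zero
  -- disjointness of the A's
  have hAdisj : (↑S : Set (Measure E)).PairwiseDisjoint A := by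
    intro ν hν ν' hν' hne
    exact Set.disjoint_of_subset (hAC ν hν) (hAC ν' hν') (hCdisj ν hν ν' hν' hne)
  have hsum : (S.card : ℝ≥0∞) * r ≤ m Set.univ := by
    calc (S.card : ℝ≥0∞) * r = ∑ ν ∈ S, r := by rw [Finset.sum_const, nsmul_eq_mul]
      _ ≤ ∑ ν ∈ S, m (A ν) := Finset.sum_le_sum hmA
      _ = m (⋃ ν ∈ S, A ν) := (measure_biUnion_finset hAdisj (fun ν hν => hAmeas ν hν)).symm
      _ ≤ m Set.univ := measure_mono (Set.subset_univ _)
  -- convert to reals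
  rw [le_div_iff₀ hψpos]
  have hfin : m Set.univ ≠ ⊤ := measure_ne_top m _
  have := ENNReal.toReal_mono hfin hsum
  rw [ENNReal.toReal_mul, ENNReal.toReal_natCast, hr, ENNReal.toReal_ofReal hψpos.le] at this
  exact this
end
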